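/- Let α ∈ (1/2, 1] and let M ≥ 2 be an integer. Every f ∈ S_α has a graph that intersects at most 3(M+1) of the rectangles Q_{ik}, where i ranges over integers with 0 ≤ i ≤ M and k ranges over integers with −M^{1/2} − 1 ≤ k ≤ M^{1/2}. -/

import Mathlib

open MeasureTheory Set Real

noncomputable section

/-- The class `S_α` of functions bounded by 1 on `[0,1]` with `α`-Hölder constant at most 1. -/
def holderClass (α : ℝ) : Set (ℝ → ℝ) :=
  {f | (∀ t ∈ Icc (0:ℝ) 1, |f t| ≤ 1) ∧
       ∀ s ∈ Icc (0:ℝ) 1, ∀ t ∈ Icc (0:ℝ) 1, |f s - f t| ≤ |s - t| ^ α}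

/-- The rectangle `R_{ℓ m} = [ℓ/N, (ℓ+1)/N] × [m/N^α, (m+1)/N^α]`. -/
def Rrect (α : ℝ) (N : ℕ) (ℓ m : ℤ) : Set (ℝ × ℝ) :=
  Icc ((ℓ:ℝ)/N) (((ℓ:ℝ)+1)/N) ×ˢ Icc ((m:ℝ)/(N:ℝ)^α) (((m:ℝ)+1)/(N:ℝ)^α)

/-- The rectangle `Q_{i k} = [i/M, (i+1)/M] × [k/M^{1/2}, (k+1)/M^{1/2}]`. -/
def Qrect (M : ℕ) (i k : ℤ) : Set (ℝ × ℝ) :=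
  Icc ((i:ℝ)/M) (((i:ℝ)+1)/M) ×ˢ Icc ((k:ℝ)/Real.sqrt M) (((k:ℝ)+1)/Real.sqrt M)

/-- `W` is a standard one-dimensional Brownian motion under `P`. -/
def IsBrownianMotion {Ω : Type*} [MeasurableSpace Ω] (P : Measure Ω) (W : ℝ → Ω → ℝ) : Prop :=
  (∀ ω, W 0 ω = 0) ∧
  (∀ ω, Continuous fun t => W t ω) ∧
  (∀ t : ℝ, Measurable (W t)) ∧
  (∀ s t : ℝ, 0 ≤ s → s ≤ t →
    Measure.map (fun ω => W t ω - W s ω) P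
      = ProbabilityTheory.gaussianReal 0 (Real.toNNReal (t - s))) ∧
  (∀ n : ℕ, ∀ t : ℕ → ℝ, Monotone t → (∀ i, 0 ≤ t i) →
    ProbabilityTheory.iIndepFun
      (fun (i : Fin n) (ω : Ω) => W (t (i + 1)) ω - W (t i) ω) P)

/-- `M = ⌊N^ε⌋`. -/
def Mpar (ε : ℝ) (N : ℕ) : ℕ := ⌊(N:ℝ) ^ ε⌋₊

/-- `J = ⌈N/M⌉`. -/
def Jpar (ε : ℝ) (N : ℕ) : ℕ := ⌈(N:ℝ) / (Mpar ε N)⌉₊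

/-- `A_{ik}(w)`: the number of `j ∈ {1, …, J}` such that `w` takes a value in
`[k/√M, (k+1)/√M]` at some time in `[i/M + (j-1)/N, i/M + j/N]`. -/
def crossCount (w : ℝ → ℝ) (N M J : ℕ) (i k : ℤ) : ℕ :=
  Set.ncard {j : ℕ | 1 ≤ j ∧ j ≤ J ∧
    ∃ t ∈ Icc ((i:ℝ)/M + ((j:ℝ)-1)/N) ((i:ℝ)/M + (j:ℝ)/N),
      (k:ℝ)/Real.sqrt M ≤ w t ∧ w t ≤ ((k:ℝ)+1)/Real.sqrt M}


/-! Over the column `[i/M, (i+1)/M]` every point of `[0,1]` lies within `1/(2M)` of a common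
point `t` of `[0,1]`, so by the Hölder bound `f` stays within `(2M)⁻¹ ^ α` of `f t` there. In
units of the row height `M^{-1/2}` this is a window of half-width `δ = (2M)⁻¹ ^ α · √M`, and
`δ ≤ 1/√2 < 1` because `α > 1/2`. A closed window of length `2δ < 2` meets at most three of the
closed rows `[k, k+1]`, hence the graph meets at most three rectangles in each of the `M + 1`
columns. -/

lemma holderClass.abs_sub_le {α : ℝ} {f : ℝ → ℝ} (hf : f ∈ holderClass α) (hα : 0 ≤ α)
    {s t r : ℝ} (hs : s ∈ Icc (0:ℝ) 1) (ht : t ∈ Icc (0:ℝ) 1) (hst : |s - t| ≤ r) :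
    |f s - f t| ≤ r ^ α :=
  (hf.2 s hs t ht).trans (rpow_le_rpow (abs_nonneg _) hst hα)

lemma inv_two_mul_rpow_mul_sqrt_lt_one {α M : ℝ} (hα : 1/2 < α) (hM : 1 ≤ M) :
    (2 * M)⁻¹ ^ α * √M < 1 :=
  calc (2 * M)⁻¹ ^ α * √M ≤ (2 * M)⁻¹ ^ (1/2 : ℝ) * √M := by
        gcongr ?_ * _
        exact rpow_le_rpow_of_exponent_ge (by positivity)
          (inv_le_one_of_one_le₀ (by linarith)) hα.le
    _ = √(1/2) := by
        rw [← sqrt_eq_rpow, ← sqrt_mul (by positivity)]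
        congr 1
        field_simp
    _ < 1 := by rw [sqrt_lt' one_pos]; norm_num

lemma mem_Icc_ceil_of_abs_sub_le {g y δ : ℝ} {k : ℤ} (hδ : δ < 1) (hy : |y - g| ≤ δ)
    (hky : k ≤ y) (hyk : y ≤ k + 1) :
    k ∈ Icc ⌈g - 1 - δ⌉ (⌈g - 1 - δ⌉ + 2) := by
  rw [abs_le] at hy
  refine ⟨Int.ceil_le.2 (by linarith), ?_⟩
  have h : (k : ℝ) < ⌈g - 1 - δ⌉ + 3 := by linarith [Int.le_ceil (g - 1 - δ)]
  have h' : k < ⌈g - 1 - δ⌉ + 3 := by exact_mod_cast h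
  omega

lemma ncard_le_card_mul_of_subset_Icc_shift {S : Set (ℤ × ℤ)} {I : Finset ℤ} {a : ℤ → ℤ} {n : ℕ}
    (hS : ∀ p ∈ S, p.1 ∈ I ∧ p.2 ∈ Icc (a p.1) (a p.1 + n)) :
    S.ncard ≤ I.card * (n + 1) := by
  let shear : ℤ × ℤ → ℤ × ℤ := fun p => (p.1, p.2 - a p.1)
  have hmaps : ∀ p ∈ S, shear p ∈ (I ×ˢ Finset.Icc 0 (n : ℤ) : Finset (ℤ × ℤ)) := by
    intro p hp
    obtain ⟨hI, hlo, hhi⟩ := hS p hp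
    simp only [shear, Finset.mem_product, Finset.mem_Icc]
    exact ⟨hI, by omega, by omega⟩
  have hinj : InjOn shear S := by
    rintro ⟨i, k⟩ - ⟨j, l⟩ - h
    simp only [shear, Prod.mk.injEq] at h
    obtain ⟨rfl, h⟩ := h
    simp only [Prod.mk.injEq, true_and]
    omega
  calc S.ncard ≤ (↑(I ×ˢ Finset.Icc 0 (n : ℤ)) : Set (ℤ × ℤ)).ncard :=
        ncard_le_ncard_of_injOn shear hmaps hinj (Finset.finite_toSet _)
    _ = I.card * (n + 1) := by
        rw [ncard_coe_finset, Finset.card_product, Int.card_Icc]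
        simp

lemma exists_rows_of_Qrect_inter_graphOn_nonempty {α : ℝ} (hα : 1/2 < α) {M : ℕ} (hM : 0 < M)
    {f : ℝ → ℝ} (hf : f ∈ holderClass α) (i : ℤ) :
    ∃ a : ℤ, ∀ k : ℤ, (Qrect M i k ∩ graphOn f (Icc 0 1)).Nonempty → k ∈ Icc a (a + 2) := by
  have hM1 : (1:ℝ) ≤ M := by exact_mod_cast hM
  have hsqrt : 0 < √(M:ℝ) := sqrt_pos.2 (by linarith)
  set t := projIcc (0:ℝ) 1 zero_le_one ((i + 1/2) / M)
  set δ := (2 * (M:ℝ))⁻¹ ^ α * √M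
  refine ⟨⌈f t * √M - 1 - δ⌉, fun k ⟨_, hQ, x, hx, hxy⟩ => ?_⟩
  subst hxy
  obtain ⟨⟨hix, hxi⟩, hkf, hfk⟩ := hQ
  have hxt : |x - t| ≤ (2 * (M:ℝ))⁻¹ := by
    calc |x - t| = |(projIcc (0:ℝ) 1 zero_le_one x : ℝ) - t| := by rw [projIcc_of_mem _ hx]
      _ ≤ |x - (i + 1/2) / M| := abs_projIcc_sub_projIcc _
      _ ≤ (2 * (M:ℝ))⁻¹ := by
        rw [abs_le]
        constructor <;> field_simp at hix hxi ⊢ <;> linarith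
  have hft := holderClass.abs_sub_le hf (by linarith) hx t.2 hxt
  refine mem_Icc_ceil_of_abs_sub_le (inv_two_mul_rpow_mul_sqrt_lt_one hα hM1) ?_
    ((div_le_iff₀ hsqrt).1 hkf) ((le_div_iff₀ hsqrt).1 hfk)
  rw [← sub_mul, abs_mul, abs_of_pos hsqrt]
  exact mul_le_mul_of_nonneg_right hft hsqrt.le

/-- For `α ∈ (1/2,1]` and `M ≥ 2`, the graph of any `f ∈ S_α` meets at most `3(M+1)` of the
rectangles `Q_{i k}` with `0 ≤ i ≤ M` and `-M^{1/2} - 1 ≤ k ≤ M^{1/2}`. -/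
theorem holder_graph_meets_at_most_3M_plus_3_Qrects
    (α : ℝ) (hα : α ∈ Ioc (1/2 : ℝ) 1) (M : ℕ) (hM : 2 ≤ M)
    (f : ℝ → ℝ) (hf : f ∈ holderClass α) :
    Set.ncard {p : ℤ × ℤ |
        0 ≤ p.1 ∧ (p.1:ℝ) ≤ M ∧
        -Real.sqrt M - 1 ≤ (p.2:ℝ) ∧ (p.2:ℝ) ≤ Real.sqrt M ∧
        (Qrect M p.1 p.2 ∩ Set.graphOn f (Icc 0 1)).Nonempty} ≤ 3 * (M + 1) := by
  choose a ha using exists_rows_of_Qrect_inter_graphOn_nonempty (M := M) hα.1 (by omega) hf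
  refine (ncard_le_card_mul_of_subset_Icc_shift (I := Finset.Icc 0 (M : ℤ)) (a := a) (n := 2)
    ?_).trans ?_
  · rintro p ⟨hi0, hiM, -, -, hmeet⟩
    exact ⟨Finset.mem_Icc.2 ⟨hi0, by exact_mod_cast hiM⟩, by exact_mod_cast ha p.1 p.2 hmeet⟩
  · simp only [Int.card_Icc, sub_zero]
    omega
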